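/- Let n ≥ 1, ℓ ≥ 2, m_0 ≥ 0, m_1 > 0, λ < 0 and ε > 0. Then there exist masses m_2,…,m_n > 0 satisfying m_{i+1} < ε·m_i for i = 1,…,n−1, and a point r ∈ R^n, such that λ_i(r) = λ for every i = 1,…,n. -/

import Mathlib

open Real BigOperators Finset

/-- The angle `θ_k = 2πk/ℓ`. -/
noncomputable def theta (ℓ k : ℕ) : ℝ := 2 * Real.pi * k / ℓ

/-- `ζ_ℓ = Σ_{k=1}^{ℓ-1} (1 - cos θ_k)^{-1/2}`. -/
noncomputable def zeta (ℓ : ℕ) : ℝ :=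
  ∑ k ∈ Finset.Ico 1 ℓ, 1 / Real.sqrt (1 - Real.cos (theta ℓ k))

/-- `R^n = {r ∈ ℝ^n : 0 < r_1 < ⋯ < r_n}`. -/
def Rn (n : ℕ) : Set (Fin n → ℝ) := {r | (∀ i, 0 < r i) ∧ StrictMono r}

/-- The multiplier `λ_i(r)` felt by the bodies on the `i`-th circle of a spiderweb
configuration with central mass `m0` and circle masses `m`. -/
noncomputable def lamCfg (ℓ n : ℕ) (m0 : ℝ) (m : Fin n → ℝ) (r : Fin n → ℝ) (i : Fin n) : ℝ :=
  (1 / r i) * (-(m0 / (r i) ^ 2) - m i * zeta ℓ / ((2 : ℝ) ^ ((3 : ℝ) / 2) * (r i) ^ 2)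
    - ∑ j ∈ Finset.univ.erase i, ∑ k ∈ Finset.range ℓ,
        m j * (r i - r j * Real.cos (theta ℓ k)) /
          ((r i) ^ 2 + (r j) ^ 2 - 2 * r i * r j * Real.cos (theta ℓ k)) ^ ((3 : ℝ) / 2))

/- ### auxiliary definitions -/

noncomputable def dsq (ℓ : ℕ) (x y : ℝ) (k : ℕ) : ℝ :=
  x ^ 2 + y ^ 2 - 2 * x * y * Real.cos (theta ℓ k)

noncomputable def pairP (ℓ : ℕ) (x y : ℝ) : ℝ :=
  ∑ k ∈ Finset.range ℓ, 1 / Real.sqrt (dsq ℓ x y k)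

noncomputable def pairD (ℓ : ℕ) (x y : ℝ) : ℝ :=
  ∑ k ∈ Finset.range ℓ,
    -((x - y * Real.cos (theta ℓ k)) / (dsq ℓ x y k * Real.sqrt (dsq ℓ x y k)))

lemma theta_zero (ℓ : ℕ) : theta ℓ 0 = 0 := by simp [theta]

lemma zeta_pos {ℓ : ℕ} (hℓ : 2 ≤ ℓ) : 0 < zeta ℓ := by
  have h1 : (1 : ℕ) ∈ Finset.Ico 1 ℓ := by
    simp [Finset.mem_Ico]; omega
  have hterm : ∀ k ∈ Finset.Ico 1 ℓ, 0 ≤ 1 / Real.sqrt (1 - Real.cos (theta ℓ k)) := by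
    intro k _; positivity
  have hpos : 0 < 1 / Real.sqrt (1 - Real.cos (theta ℓ 1)) := by
    have hθ : theta ℓ 1 = 2 * Real.pi / ℓ := by simp [theta]
    have hℓ' : (0:ℝ) < ℓ := by positivity
    have h0 : 0 < theta ℓ 1 := by
      rw [hθ]; positivity
    have h2 : theta ℓ 1 < 2 * Real.pi := by
      rw [hθ]
      have : (1:ℝ) < ℓ := by exact_mod_cast (by omega : 1 < ℓ)
      rw [div_lt_iff₀ hℓ']
      nlinarith [Real.pi_pos]
    have hcos : Real.cos (theta ℓ 1) < 1 := by
      rcases lt_or_eq_of_le (Real.cos_le_one (theta ℓ 1)) with h | h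
      · exact h
      · exfalso
        have := (Real.cos_eq_one_iff_of_lt_of_lt (by linarith [Real.pi_pos] : -(2*Real.pi) < theta ℓ 1) h2).1 h
        linarith
    have : 0 < 1 - Real.cos (theta ℓ 1) := by linarith
    positivity
  calc 0 < 1 / Real.sqrt (1 - Real.cos (theta ℓ 1)) := hpos
    _ ≤ zeta ℓ := Finset.single_le_sum hterm h1

lemma dsq_comm (ℓ : ℕ) (x y : ℝ) (k : ℕ) : dsq ℓ x y k = dsq ℓ y x k := by
  simp [dsq]; ring

lemma dsq_pos {ℓ : ℕ} {x y : ℝ} (hx : 0 < x) (hy : 0 < y) (hne : x ≠ y) (k : ℕ) :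
    0 < dsq ℓ x y k := by
  have h1 : Real.cos (theta ℓ k) ≤ 1 := Real.cos_le_one _
  have h2 : (0:ℝ) < (x - y)^2 := by
    have : x - y ≠ 0 := sub_ne_zero.2 hne
    positivity
  have : dsq ℓ x y k = (x-y)^2 + 2*x*y*(1 - Real.cos (theta ℓ k)) := by unfold dsq; ring
  rw [this]
  nlinarith [mul_pos hx hy]

lemma dsq_zero (ℓ : ℕ) (x y : ℝ) : dsq ℓ x y 0 = (x - y)^2 := by
  simp [dsq, theta_zero]; ring

lemma pairP_comm (ℓ : ℕ) (x y : ℝ) : pairP ℓ x y = pairP ℓ y x := by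
  unfold pairP
  exact Finset.sum_congr rfl fun k _ => by rw [dsq_comm]

lemma pairP_nonneg (ℓ : ℕ) (x y : ℝ) : 0 ≤ pairP ℓ x y :=
  Finset.sum_nonneg fun k _ => by positivity

lemma pairP_collision {ℓ : ℕ} (hℓ : 0 < ℓ) (x y : ℝ) :
    1 / |x - y| ≤ pairP ℓ x y := by
  have h0 : (0:ℕ) ∈ Finset.range ℓ := Finset.mem_range.2 hℓ
  have := Finset.single_le_sum (f := fun k => 1 / Real.sqrt (dsq ℓ x y k))
    (fun k _ => by positivity) h0
  simp only [dsq_zero, Real.sqrt_sq_eq_abs] at this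
  exact this

/- ### derivatives -/

lemma hasDerivAt_invsqrt_dsq {ℓ : ℕ} {x y : ℝ} (k : ℕ) (hd : 0 < dsq ℓ x y k) :
    HasDerivAt (fun t => 1 / Real.sqrt (dsq ℓ t y k))
      (-((x - y * Real.cos (theta ℓ k)) / (dsq ℓ x y k * Real.sqrt (dsq ℓ x y k)))) x := by
  set c := Real.cos (theta ℓ k) with hc
  have hq : HasDerivAt (fun t : ℝ => dsq ℓ t y k) (2*x - 2*y*c) x := by
    have h1 : (fun t : ℝ => dsq ℓ t y k) = fun t => (t^2 + y^2) - (2*y*c)*t := by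
      funext t; unfold dsq; rw [← hc]; ring
    rw [h1]
    have h2 : HasDerivAt (fun t : ℝ => t^2 + y^2) (2*x) x := by
      simpa using (hasDerivAt_pow 2 x).add_const (y^2)
    have h3 : HasDerivAt (fun t : ℝ => (2*y*c)*t) (2*y*c) x := by
      simpa using (hasDerivAt_id x).const_mul (2*y*c)
    exact h2.sub h3
  have hsd : Real.sqrt (dsq ℓ x y k) ≠ 0 := by
    exact ne_of_gt (Real.sqrt_pos.2 hd)
  have hs := hq.sqrt (ne_of_gt hd)
  have hi := hs.inv hsd
  have hsq : Real.sqrt (dsq ℓ x y k) ^ 2 = dsq ℓ x y k := Real.sq_sqrt hd.le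
  have hfun : (fun t => 1 / Real.sqrt (dsq ℓ t y k)) = fun t => (Real.sqrt (dsq ℓ t y k))⁻¹ := by
    funext t; rw [one_div]
  rw [hfun]
  refine hi.congr_deriv (Eq.symm ?_)
  rw [hsq]
  field_simp

lemma hasDerivAt_pairP {ℓ : ℕ} {x y : ℝ} (hx : 0 < x) (hy : 0 < y) (hne : x ≠ y) :
    HasDerivAt (fun t => pairP ℓ t y) (pairD ℓ x y) x := by
  unfold pairP pairD
  exact HasDerivAt.fun_sum fun k _ => hasDerivAt_invsqrt_dsq k (dsq_pos hx hy hne k)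

/- ### the functional -/

noncomputable def cOne {n : ℕ} (ℓ : ℕ) (m0 : ℝ) (m : Fin n → ℝ) (i : Fin n) : ℝ :=
  (ℓ : ℝ) * (m0 * m i + (m i)^2 * (zeta ℓ / (2 * Real.sqrt 2)))

noncomputable def cTwo {n : ℕ} (ℓ : ℕ) (lam : ℝ) (m : Fin n → ℝ) (i : Fin n) : ℝ :=
  (-lam) * (ℓ : ℝ) * m i / 2

noncomputable def cThree {n : ℕ} (ℓ : ℕ) (m : Fin n → ℝ) (i j : Fin n) : ℝ :=
  (ℓ : ℝ) / 2 * (m i * m j)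

noncomputable def Gf {n : ℕ} (ℓ : ℕ) (m0 lam : ℝ) (m : Fin n → ℝ) (r : Fin n → ℝ) : ℝ :=
  (∑ i, (cOne ℓ m0 m i / r i + cTwo ℓ lam m i * (r i)^2))
  + ∑ i, ∑ j ∈ Finset.univ.erase i, cThree ℓ m i j * pairP ℓ (r i) (r j)

lemma hasDerivAt_Gf {n ℓ : ℕ} {m0 lam : ℝ} {m : Fin n → ℝ} {r : Fin n → ℝ}
    (hr : r ∈ Rn n) (i₀ : Fin n) :
    HasDerivAt (fun t => Gf ℓ m0 lam m (Function.update r i₀ t))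
      (-(cOne ℓ m0 m i₀) / (r i₀)^2 + cTwo ℓ lam m i₀ * (2 * r i₀)
        + ∑ j ∈ Finset.univ.erase i₀,
            (cThree ℓ m i₀ j + cThree ℓ m j i₀) * pairD ℓ (r i₀) (r j)) (r i₀) := by
  obtain ⟨hpos, hmono⟩ := hr
  have hinj := hmono.injective
  set x := r i₀ with hxdef
  have hx : 0 < x := hpos i₀
  have hfun : (fun t => Gf ℓ m0 lam m (Function.update r i₀ t)) =
      (fun t : ℝ =>
        ((cOne ℓ m0 m i₀ / t + cTwo ℓ lam m i₀ * t^2)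
          + (∑ i ∈ Finset.univ.erase i₀, (cOne ℓ m0 m i / r i + cTwo ℓ lam m i * (r i)^2)))
        + ((∑ j ∈ Finset.univ.erase i₀, cThree ℓ m i₀ j * pairP ℓ t (r j))
          + (∑ i ∈ Finset.univ.erase i₀, (cThree ℓ m i i₀ * pairP ℓ (r i) t
              + ∑ j ∈ (Finset.univ.erase i).erase i₀,
                  cThree ℓ m i j * pairP ℓ (r i) (r j))))) := by
    funext t
    unfold Gf
    congr 1
    · rw [← Finset.add_sum_erase _ _ (Finset.mem_univ i₀), Function.update_self]
      congr 1
      exact Finset.sum_congr rfl fun i hi => by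
        rw [Function.update_of_ne (Finset.mem_erase.1 hi).1]
    · rw [← Finset.add_sum_erase _ _ (Finset.mem_univ i₀)]
      congr 1
      · exact Finset.sum_congr rfl fun j hj => by
          rw [Function.update_self, Function.update_of_ne (Finset.mem_erase.1 hj).1]
      · refine Finset.sum_congr rfl fun i hi => ?_
        have hii₀ : i ≠ i₀ := (Finset.mem_erase.1 hi).1
        have hmem : i₀ ∈ Finset.univ.erase i :=
          Finset.mem_erase.2 ⟨hii₀.symm, Finset.mem_univ _⟩
        rw [← Finset.add_sum_erase _ _ hmem, Function.update_of_ne hii₀, Function.update_self]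
        congr 1
        exact Finset.sum_congr rfl fun j hj => by
          rw [Function.update_of_ne (Finset.mem_erase.1 hj).1]
  rw [hfun]
  have ha : HasDerivAt (fun t : ℝ => cOne ℓ m0 m i₀ / t) (-(cOne ℓ m0 m i₀)/x^2) x := by
    have h := (hasDerivAt_inv hx.ne').const_mul (cOne ℓ m0 m i₀)
    have hfe : (fun t : ℝ => cOne ℓ m0 m i₀ * t⁻¹) = fun t => cOne ℓ m0 m i₀ / t := by
      funext t; rw [div_eq_mul_inv]
    rw [hfe] at h
    refine h.congr_deriv (Eq.symm ?_)
    ring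
  have hb : HasDerivAt (fun t : ℝ => cTwo ℓ lam m i₀ * t^2) (cTwo ℓ lam m i₀ * (2*x)) x := by
    have := (hasDerivAt_pow 2 x).const_mul (cTwo ℓ lam m i₀)
    simpa using this
  have h3 : HasDerivAt (fun t : ℝ => ∑ j ∈ Finset.univ.erase i₀, cThree ℓ m i₀ j * pairP ℓ t (r j))
      (∑ j ∈ Finset.univ.erase i₀, cThree ℓ m i₀ j * pairD ℓ x (r j)) x :=
    HasDerivAt.fun_sum fun j hj =>
      (hasDerivAt_pairP hx (hpos j)
        (fun h => (Finset.mem_erase.1 hj).1 (hinj h).symm)).const_mul _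
  have h4 : HasDerivAt (fun t : ℝ => ∑ i ∈ Finset.univ.erase i₀,
        (cThree ℓ m i i₀ * pairP ℓ (r i) t
          + ∑ j ∈ (Finset.univ.erase i).erase i₀, cThree ℓ m i j * pairP ℓ (r i) (r j)))
      (∑ i ∈ Finset.univ.erase i₀, cThree ℓ m i i₀ * pairD ℓ x (r i)) x := by
    refine HasDerivAt.fun_sum fun i hi => ?_
    have hii₀ : i ≠ i₀ := (Finset.mem_erase.1 hi).1
    have hfe : (fun t : ℝ => cThree ℓ m i i₀ * pairP ℓ (r i) t)
        = fun t => cThree ℓ m i i₀ * pairP ℓ t (r i) := by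
      funext t; rw [pairP_comm]
    have h := ((hasDerivAt_pairP (ℓ := ℓ) hx (hpos i)
        (fun h => hii₀ (hinj h).symm)).const_mul (cThree ℓ m i i₀))
    rw [← hfe] at h
    exact h.add_const _
  have htot := ((ha.add hb).add_const
      (∑ i ∈ Finset.univ.erase i₀, (cOne ℓ m0 m i / r i + cTwo ℓ lam m i * (r i)^2))).add
    (h3.add h4)
  refine htot.congr_deriv (Eq.symm ?_)
  congr 1
  rw [Finset.sum_congr rfl (fun j _ => add_mul (cThree ℓ m i₀ j) (cThree ℓ m j i₀) (pairD ℓ x (r j))),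
    Finset.sum_add_distrib]

/- ### continuity -/

lemma continuousOn_Gf {n : ℕ} (ℓ : ℕ) (m0 lam : ℝ) (m : Fin n → ℝ) :
    ContinuousOn (Gf ℓ m0 lam m) (Rn n) := by
  apply ContinuousOn.add
  · apply continuousOn_finset_sum; intro i _
    apply ContinuousOn.add
    · exact continuousOn_const.div (continuous_apply i).continuousOn
        (fun r hr => (hr.1 i).ne')
    · exact continuousOn_const.mul (((continuous_apply i).continuousOn).pow 2)
  · apply continuousOn_finset_sum; intro i _
    apply continuousOn_finset_sum; intro j hj
    have hji : j ≠ i := (Finset.mem_erase.1 hj).1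
    apply ContinuousOn.mul continuousOn_const
    unfold pairP
    apply continuousOn_finset_sum; intro k _
    apply ContinuousOn.div continuousOn_const
    · apply ContinuousOn.sqrt
      unfold dsq
      fun_prop
    · intro r hr
      refine ne_of_gt (Real.sqrt_pos.2 (dsq_pos (hr.1 i) (hr.1 j) ?_ k))
      exact fun h => hji (hr.2.injective h).symm

/- ### lower bounds -/

section bounds

variable {n ℓ : ℕ} {m0 lam : ℝ} {m : Fin n → ℝ} {r : Fin n → ℝ}

lemma cOne_pos (hℓ : 2 ≤ ℓ) (hm0 : 0 ≤ m0) (hm : ∀ i, 0 < m i) (i : Fin n) :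
    0 < cOne ℓ m0 m i := by
  have hz := zeta_pos hℓ
  have hw : (0:ℝ) < Real.sqrt 2 := Real.sqrt_pos.2 (by norm_num)
  have hL : (0:ℝ) < (ℓ:ℝ) := by exact_mod_cast (by omega : 0 < ℓ)
  have h1 : 0 ≤ m0 * m i := mul_nonneg hm0 (hm i).le
  have h2 : 0 < (m i)^2 * (zeta ℓ / (2 * Real.sqrt 2)) :=
    mul_pos (pow_pos (hm i) 2) (div_pos hz (by positivity))
  unfold cOne
  exact mul_pos hL (add_pos_of_nonneg_of_pos h1 h2)

lemma cTwo_pos (hℓ : 2 ≤ ℓ) (hlam : lam < 0) (hm : ∀ i, 0 < m i) (i : Fin n) :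
    0 < cTwo ℓ lam m i := by
  have h : (0:ℝ) < -lam := by linarith
  have hL : (0:ℝ) < (ℓ:ℝ) := by exact_mod_cast (by omega : 0 < ℓ)
  unfold cTwo
  exact div_pos (mul_pos (mul_pos h hL) (hm i)) two_pos

lemma cThree_pos (hℓ : 2 ≤ ℓ) (hm : ∀ i, 0 < m i) (i j : Fin n) :
    0 < cThree ℓ m i j := by
  have hL : (0:ℝ) < (ℓ:ℝ) := by exact_mod_cast (by omega : 0 < ℓ)
  unfold cThree
  exact mul_pos (div_pos hL two_pos) (mul_pos (hm i) (hm j))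

lemma Gf_term1_le (hℓ : 2 ≤ ℓ) (hm0 : 0 ≤ m0) (hlam : lam < 0) (hm : ∀ i, 0 < m i)
    (hr : r ∈ Rn n) (i : Fin n) :
    cOne ℓ m0 m i / r i + cTwo ℓ lam m i * (r i)^2 ≤ Gf ℓ m0 lam m r := by
  have hA : ∀ i' ∈ Finset.univ, (0:ℝ) ≤ cOne ℓ m0 m i' / r i' + cTwo ℓ lam m i' * (r i')^2 := by
    intro i' _
    have h1 := cOne_pos hℓ hm0 hm i'
    have h2 := cTwo_pos hℓ hlam hm i'
    have h3 := hr.1 i'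
    exact add_nonneg (div_nonneg h1.le h3.le) (mul_nonneg h2.le (sq_nonneg _))
  have h := Finset.single_le_sum hA (Finset.mem_univ i)
  have hB : (0:ℝ) ≤ ∑ i', ∑ j ∈ Finset.univ.erase i', cThree ℓ m i' j * pairP ℓ (r i') (r j) :=
    Finset.sum_nonneg fun i' _ => Finset.sum_nonneg fun j _ =>
      mul_nonneg (cThree_pos hℓ hm i' j).le (pairP_nonneg ℓ _ _)
  unfold Gf; linarith

lemma Gf_term3_le (hℓ : 2 ≤ ℓ) (hm0 : 0 ≤ m0) (hlam : lam < 0) (hm : ∀ i, 0 < m i)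
    (hr : r ∈ Rn n) {i j : Fin n} (hij : j ≠ i) :
    cThree ℓ m i j * pairP ℓ (r i) (r j) ≤ Gf ℓ m0 lam m r := by
  have hA : (0:ℝ) ≤ ∑ i', (cOne ℓ m0 m i' / r i' + cTwo ℓ lam m i' * (r i')^2) := by
    refine Finset.sum_nonneg fun i' _ => ?_
    have h1 := cOne_pos hℓ hm0 hm i'
    have h2 := cTwo_pos hℓ hlam hm i'
    have h3 := hr.1 i'
    exact add_nonneg (div_nonneg h1.le h3.le) (mul_nonneg h2.le (sq_nonneg _))
  have hterm : ∀ i' ∈ Finset.univ,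
      (0:ℝ) ≤ ∑ j' ∈ Finset.univ.erase i', cThree ℓ m i' j' * pairP ℓ (r i') (r j') :=
    fun i' _ => Finset.sum_nonneg fun j' _ =>
      mul_nonneg (cThree_pos hℓ hm i' j').le (pairP_nonneg ℓ _ _)
  have h1 := Finset.single_le_sum hterm (Finset.mem_univ i)
  have h2 := Finset.single_le_sum
    (f := fun j' => cThree ℓ m i j' * pairP ℓ (r i) (r j'))
    (fun j' _ => mul_nonneg (cThree_pos hℓ hm i j').le (pairP_nonneg ℓ _ _))
    (Finset.mem_erase.2 ⟨hij, Finset.mem_univ j⟩)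
  unfold Gf; linarith

end bounds

/- ### from vanishing derivative to the central-configuration equation -/

lemma rpow_three_halves {d : ℝ} (hd : 0 < d) : d ^ ((3:ℝ)/2) = d * Real.sqrt d := by
  rw [show (3:ℝ)/2 = 1 + 1/2 by norm_num, Real.rpow_add hd, Real.rpow_one,
    ← Real.sqrt_eq_rpow]

lemma two_rpow_three_halves : (2:ℝ) ^ ((3:ℝ)/2) = 2 * Real.sqrt 2 :=
  rpow_three_halves two_pos

lemma lamCfg_eq_of_deriv_zero {n ℓ : ℕ} {m0 lam : ℝ} {m : Fin n → ℝ} {r : Fin n → ℝ}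
    (hℓ : 2 ≤ ℓ) (hm : ∀ i, 0 < m i) (hr : r ∈ Rn n) (i : Fin n)
    (h0 : -(cOne ℓ m0 m i) / (r i)^2 + cTwo ℓ lam m i * (2 * r i)
        + ∑ j ∈ Finset.univ.erase i,
            (cThree ℓ m i j + cThree ℓ m j i) * pairD ℓ (r i) (r j) = 0) :
    lamCfg ℓ n m0 m r i = lam := by
  obtain ⟨hpos, hmono⟩ := hr
  have hinj := hmono.injective
  have hL : (0:ℝ) < (ℓ:ℝ) := by exact_mod_cast (by omega : 0 < ℓ)
  have hR : (0:ℝ) < r i := hpos i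
  have hM : (0:ℝ) < m i := hm i
  have hw : (0:ℝ) < Real.sqrt 2 := Real.sqrt_pos.2 (by norm_num)
  set S : ℝ := ∑ j ∈ Finset.univ.erase i, ∑ k ∈ Finset.range ℓ,
      m j * (r i - r j * Real.cos (theta ℓ k)) /
        (dsq ℓ (r i) (r j) k * Real.sqrt (dsq ℓ (r i) (r j) k)) with hSdef
  -- rewrite the sum in h0
  have e1 : ∑ j ∈ Finset.univ.erase i,
      (cThree ℓ m i j + cThree ℓ m j i) * pairD ℓ (r i) (r j) = -((ℓ:ℝ) * m i * S) := by
    rw [hSdef, Finset.mul_sum (s := Finset.univ.erase i), ← Finset.sum_neg_distrib]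
    refine Finset.sum_congr rfl fun j hj => ?_
    unfold cThree pairD
    rw [Finset.mul_sum (s := Finset.range ℓ), Finset.mul_sum (s := Finset.range ℓ),
      ← Finset.sum_neg_distrib]
    refine Finset.sum_congr rfl fun k _ => ?_
    ring
  rw [e1] at h0
  -- rewrite lamCfg
  have e2 : lamCfg ℓ n m0 m r i
      = (1 / r i) * (-(m0 / (r i)^2) - m i * zeta ℓ / ((2 * Real.sqrt 2) * (r i)^2) - S) := by
    unfold lamCfg
    rw [two_rpow_three_halves, hSdef]
    congr 2
    refine Finset.sum_congr rfl fun j hj => Finset.sum_congr rfl fun k _ => ?_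
    have hj' : j ≠ i := (Finset.mem_erase.1 hj).1
    have hd : 0 < dsq ℓ (r i) (r j) k :=
      dsq_pos hR (hpos j) (fun h => hj' (hinj h).symm) k
    have : ((r i) ^ 2 + (r j) ^ 2 - 2 * r i * r j * Real.cos (theta ℓ k)) ^ ((3:ℝ)/2)
        = dsq ℓ (r i) (r j) k * Real.sqrt (dsq ℓ (r i) (r j) k) := by
      rw [← rpow_three_halves hd]; rfl
    rw [this]
  rw [e2]
  -- solve
  unfold cOne cTwo at h0
  have hRne : r i ≠ 0 := hR.ne'
  have hMne : m i ≠ 0 := hM.ne'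
  have hLne : (ℓ:ℝ) ≠ 0 := hL.ne'
  have hwne : Real.sqrt 2 ≠ 0 := hw.ne'
  have h1 : ((ℓ:ℝ) * m i) * S
      = ((ℓ:ℝ) * m i) * (-(m0 / (r i)^2) - m i * zeta ℓ / ((2 * Real.sqrt 2) * (r i)^2)
          - lam * r i) := by
    linear_combination (-1:ℝ) * h0
  have hS : S = -(m0 / (r i)^2) - m i * zeta ℓ / ((2 * Real.sqrt 2) * (r i)^2) - lam * r i :=
    mul_left_cancel₀ (mul_ne_zero hLne hMne) h1
  rw [hS]
  field_simp
  ring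


/- ### topology -/

lemma isOpen_Rn (n : ℕ) : IsOpen (Rn n) := by
  have hset : Rn n = (⋂ i : Fin n, {r : Fin n → ℝ | 0 < r i})
      ∩ ⋂ i : Fin n, ⋂ j : Fin n, {r : Fin n → ℝ | i < j → r i < r j} := by
    ext r
    simp only [Rn, Set.mem_inter_iff, Set.mem_iInter, Set.mem_setOf_eq]
    constructor
    · rintro ⟨h1, h2⟩; exact ⟨h1, fun i j h => h2 h⟩
    · rintro ⟨h1, h2⟩; exact ⟨h1, fun i j h => h2 i j h⟩
  rw [hset]
  refine IsOpen.inter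
    (isOpen_iInter_of_finite fun i => isOpen_lt continuous_const (continuous_apply i))
    (isOpen_iInter_of_finite fun i => isOpen_iInter_of_finite fun j => ?_)
  by_cases h : i < j
  · have : {r : Fin n → ℝ | i < j → r i < r j} = {r : Fin n → ℝ | r i < r j} := by
      ext; simp [h]
    rw [this]; exact isOpen_lt (continuous_apply i) (continuous_apply j)
  · have : {r : Fin n → ℝ | i < j → r i < r j} = Set.univ := by
      ext; simp [h]
    rw [this]; exact isOpen_univ

/- ### existence of a critical point -/

lemma exists_critical {n ℓ : ℕ} (hn : 1 ≤ n) (hℓ : 2 ≤ ℓ) {m0 lam : ℝ}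
    (hm0 : 0 ≤ m0) (hlam : lam < 0) {m : Fin n → ℝ} (hm : ∀ i, 0 < m i) :
    ∃ r ∈ Rn n, ∀ i, lamCfg ℓ n m0 m r i = lam := by
  classical
  -- reference point
  set r0 : Fin n → ℝ := fun i => 1 + (i : ℕ) with hr0def
  have hr0 : r0 ∈ Rn n := by
    constructor
    · intro i; have : (0:ℝ) ≤ (i:ℕ) := Nat.cast_nonneg _; simp [hr0def]; linarith
    · intro a b hab
      have : (a:ℕ) < (b:ℕ) := hab
      simp only [hr0def]
      have : ((a:ℕ):ℝ) < ((b:ℕ):ℝ) := by exact_mod_cast this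
      linarith
  set c := Gf ℓ m0 lam m r0 with hcdef
  have hc_pos : 0 < c := by
    have i0 : Fin n := ⟨0, hn⟩
    have h1 := Gf_term1_le hℓ hm0 hlam hm hr0 i0
    have h2 := cOne_pos hℓ hm0 hm i0
    have h3 := cTwo_pos hℓ hlam hm i0
    have h4 := hr0.1 i0
    have h5 : 0 < cOne ℓ m0 m i0 / r0 i0 + cTwo ℓ lam m i0 * (r0 i0)^2 := by positivity
    linarith
  -- the compact region
  set lo : Fin n → ℝ := fun i => cOne ℓ m0 m i / c with hlodef
  set hi : Fin n → ℝ := fun i => Real.sqrt (c / cTwo ℓ lam m i) with hhidef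
  set gap : Fin n → Fin n → ℝ := fun i j => cThree ℓ m i j / c with hgapdef
  set K : Set (Fin n → ℝ) := (Set.univ.pi fun i => Set.Icc (lo i) (hi i))
      ∩ {r : Fin n → ℝ | ∀ i j : Fin n, i < j → r i + gap i j ≤ r j} with hKdef
  have hKcomp : IsCompact K := by
    refine (isCompact_univ_pi fun i => isCompact_Icc).inter_right ?_
    have : {r : Fin n → ℝ | ∀ i j : Fin n, i < j → r i + gap i j ≤ r j}
        = ⋂ i : Fin n, ⋂ j : Fin n, {r : Fin n → ℝ | i < j → r i + gap i j ≤ r j} := by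
      ext r; simp [Set.mem_iInter]
    rw [this]
    refine isClosed_iInter fun i => isClosed_iInter fun j => ?_
    by_cases h : i < j
    · have : {r : Fin n → ℝ | i < j → r i + gap i j ≤ r j}
          = {r : Fin n → ℝ | r i + gap i j ≤ r j} := by ext; simp [h]
      rw [this]
      exact isClosed_le ((continuous_apply i).add continuous_const) (continuous_apply j)
    · have : {r : Fin n → ℝ | i < j → r i + gap i j ≤ r j} = Set.univ := by ext; simp [h]
      rw [this]; exact isClosed_univ
  have hKsub : K ⊆ Rn n := by
    rintro r ⟨h1, h2⟩
    have hrpos : ∀ i, 0 < r i := by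
      intro i
      have := (h1 i (Set.mem_univ i)).1
      have hlo : 0 < lo i := div_pos (cOne_pos hℓ hm0 hm i) hc_pos
      linarith
    refine ⟨hrpos, fun a b hab => ?_⟩
    have hgap : 0 < gap a b := div_pos (cThree_pos hℓ hm a b) hc_pos
    have := h2 a b hab
    linarith
  have hSsubK : ∀ r ∈ Rn n, Gf ℓ m0 lam m r ≤ c → r ∈ K := by
    intro r hr hGr
    have hrpos := hr.1
    constructor
    · intro i _
      constructor
      · -- lo i ≤ r i
        have hb := Gf_term1_le hℓ hm0 hlam hm hr i
        have h2 := cTwo_pos hℓ hlam hm i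
        have hq : 0 ≤ cTwo ℓ lam m i * (r i)^2 := mul_nonneg h2.le (sq_nonneg _)
        have : cOne ℓ m0 m i / r i ≤ c := by linarith
        have h3 : cOne ℓ m0 m i ≤ c * r i := (div_le_iff₀ (hrpos i)).1 this
        rw [hlodef]
        exact (div_le_iff₀ hc_pos).2 (by linarith [h3])
      · -- r i ≤ hi i
        have hb := Gf_term1_le hℓ hm0 hlam hm hr i
        have h1 := cOne_pos hℓ hm0 hm i
        have hq : 0 ≤ cOne ℓ m0 m i / r i := div_nonneg h1.le (hrpos i).le
        have h2 := cTwo_pos hℓ hlam hm i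
        have h3 : cTwo ℓ lam m i * (r i)^2 ≤ c := by linarith
        have h4 : (r i)^2 ≤ c / cTwo ℓ lam m i := (le_div_iff₀' h2).2 (by linarith)
        rw [hhidef]
        exact (Real.le_sqrt (hrpos i).le (div_nonneg hc_pos.le h2.le)).2 h4
    · intro i j hij
      have hb := Gf_term3_le hℓ hm0 hlam hm hr (i := i) (j := j) (fun h => (ne_of_lt hij).symm h)
      have h3 := cThree_pos hℓ hm i j
      have hd : 0 < r j - r i := sub_pos.2 (hr.2 hij)
      have hp : 1 / (r j - r i) ≤ pairP ℓ (r i) (r j) := by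
        have := pairP_collision (by omega : 0 < ℓ) (r i) (r j)
        have habs : |r i - r j| = r j - r i := by
          rw [abs_of_neg (by linarith)]; ring
        rwa [habs] at this
      have h5 : cThree ℓ m i j * (1 / (r j - r i)) ≤ c :=
        le_trans (mul_le_mul_of_nonneg_left hp h3.le) (le_trans hb hGr)
      have h6 : cThree ℓ m i j ≤ c * (r j - r i) := by
        rw [mul_one_div] at h5
        exact (div_le_iff₀ hd).1 h5
      have h7 : gap i j ≤ r j - r i := by
        rw [hgapdef]
        exact (div_le_iff₀' hc_pos).2 (by linarith [h6])
      linarith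
  have hr0K : r0 ∈ K := hSsubK r0 hr0 le_rfl
  obtain ⟨rs, hrsK, hmin⟩ := hKcomp.exists_isMinOn ⟨r0, hr0K⟩
    ((continuousOn_Gf ℓ m0 lam m).mono hKsub)
  have hrsRn : rs ∈ Rn n := hKsub hrsK
  have hminRn : IsMinOn (Gf ℓ m0 lam m) (Rn n) rs := by
    intro r hr
    by_cases hGr : Gf ℓ m0 lam m r ≤ c
    · exact hmin (hSsubK r hr hGr)
    · have h1 : Gf ℓ m0 lam m rs ≤ c := hmin hr0K
      have := not_le.1 hGr
      simp only [Set.mem_setOf_eq]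
      linarith
  have hlocal : IsLocalMin (Gf ℓ m0 lam m) rs :=
    hminRn.isLocalMin ((isOpen_Rn n).mem_nhds hrsRn)
  refine ⟨rs, hrsRn, fun i => ?_⟩
  have hcont : Continuous (fun t : ℝ => Function.update rs i t) := by
    apply continuous_pi; intro j
    rcases eq_or_ne j i with rfl | h
    · simp; exact continuous_id
    · simpa [Function.update_of_ne h] using (continuous_const : Continuous fun _ : ℝ => rs j)
  have hloc_i : IsLocalMin (fun t => Gf ℓ m0 lam m (Function.update rs i t)) (rs i) := by
    have h' : IsLocalMin (Gf ℓ m0 lam m) (Function.update rs i (rs i)) := by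
      rw [Function.update_eq_self]; exact hlocal
    exact h'.comp_continuous hcont.continuousAt
  have hz := hloc_i.hasDerivAt_eq_zero (hasDerivAt_Gf hrsRn i)
  exact lamCfg_eq_of_deriv_zero hℓ hm hrsRn i hz

/-- Given `n ≥ 1`, `ℓ ≥ 2`, `m0 ≥ 0`, `m_1 > 0`, `λ < 0` and `ε > 0`, there are masses
`m_2, …, m_n > 0` with `m_{i+1} < ε·m_i` and radii `r ∈ R^n` giving an `n×ℓ+1` spiderweb
central configuration with multiplier `λ`. -/
theorem spiderweb_exists_rapidly_decreasing_masses (n ℓ : ℕ) (hn : 1 ≤ n) (hℓ : 2 ≤ ℓ)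
    (m0 : ℝ) (hm0 : 0 ≤ m0) (m1 : ℝ) (hm1 : 0 < m1)
    (lam : ℝ) (hlam : lam < 0) (ε : ℝ) (hε : 0 < ε) :
    ∃ m : Fin n → ℝ, m ⟨0, hn⟩ = m1 ∧ (∀ i, 0 < m i) ∧
      (∀ i j : Fin n, (j : ℕ) = (i : ℕ) + 1 → m j < ε * m i) ∧
      ∃ r ∈ Rn n, ∀ i, lamCfg ℓ n m0 m r i = lam := by
  set m : Fin n → ℝ := fun i => m1 * (ε / 2) ^ (i : ℕ) with hmdef
  have hmpos : ∀ i, 0 < m i := fun i => mul_pos hm1 (pow_pos (by linarith) _)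
  refine ⟨m, by simp [hmdef], hmpos, ?_, exists_critical hn hℓ hm0 hlam hmpos⟩
  intro i j hji
  have : m j = m i * (ε / 2) := by
    rw [hmdef]; simp only
    rw [hji, pow_succ]; ring
  rw [this]
  have := hmpos i
  nlinarith
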